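/- Let X be a quasi-median graph and J a hyperplane. The neighborhood N(J) of J, i.e., the subgraph of X generated by the edges of J, is a gated subgraph of X. -/

import Mathlib

variable {V : Type*}

namespace QM

/-- `y` is a gate for `x` in the vertex set `Y`. -/
def IsGate (G : SimpleGraph V) (Y : Set V) (x y : V) : Prop :=
  y ∈ Y ∧ ∀ z ∈ Y, G.dist x z = G.dist x y + G.dist y z

/-- `Y` is gated: every vertex admits a gate in `Y`. -/
def Gated (G : SimpleGraph V) (Y : Set V) : Prop :=
  ∀ x : V, ∃ y : V, IsGate G Y x y

/-- Triangle condition of weak modularity. -/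
def TriangleCondition (G : SimpleGraph V) : Prop :=
  ∀ u v w : V, G.Adj v w → G.dist u v = G.dist u w →
    ∃ x : V, G.Adj v x ∧ G.Adj w x ∧ G.dist u x + 1 = G.dist u v

/-- Quadrangle condition of weak modularity. -/
def QuadrangleCondition (G : SimpleGraph V) : Prop :=
  ∀ u z v w : V, G.Adj z v → G.Adj z w → v ≠ w →
    G.dist u v + 1 = G.dist u z → G.dist u w + 1 = G.dist u z →
      ∃ x : V, G.Adj v x ∧ G.Adj w x ∧ G.dist u x + 2 = G.dist u z

/-- No induced `K₄` minus an edge. -/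
def NoK4Minus (G : SimpleGraph V) : Prop :=
  ¬ ∃ a b c d : V, a ≠ b ∧ G.Adj c d ∧ G.Adj a c ∧ G.Adj a d ∧ G.Adj b c ∧ G.Adj b d ∧
    ¬ G.Adj a b

/-- No induced `K_{3,2}`. -/
def NoK32 (G : SimpleGraph V) : Prop :=
  ¬ ∃ a b c d e : V, a ≠ b ∧ a ≠ c ∧ b ≠ c ∧ d ≠ e ∧
    G.Adj a d ∧ G.Adj a e ∧ G.Adj b d ∧ G.Adj b e ∧ G.Adj c d ∧ G.Adj c e ∧
    ¬ G.Adj a b ∧ ¬ G.Adj a c ∧ ¬ G.Adj b c ∧ ¬ G.Adj d e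

/-- Quasi-median graph: weakly modular, no induced `K₄⁻`, no induced `K_{3,2}`. -/
def QuasiMedian (G : SimpleGraph V) : Prop :=
  TriangleCondition G ∧ QuadrangleCondition G ∧ NoK4Minus G ∧ NoK32 G

/-- A clique: a maximal complete subgraph, given by its (nonempty) vertex set. -/
def IsMaxClique (G : SimpleGraph V) (C : Set V) : Prop :=
  G.IsClique C ∧ ∀ D : Set V, G.IsClique D → C ⊆ D → C = D

/-- All endpoints of the edge `e` lie in `C`. -/
def EdgeOf (C : Set V) (e : Sym2 V) : Prop := ∀ v ∈ e, v ∈ C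

/-- Two edges lie in a common (maximal) clique. -/
def SameClique (G : SimpleGraph V) (e f : Sym2 V) : Prop :=
  ∃ C : Set V, IsMaxClique G C ∧ EdgeOf C e ∧ EdgeOf C f

/-- Two edges are opposite sides of an induced square. -/
def OppSquare (G : SimpleGraph V) (e f : Sym2 V) : Prop :=
  ∃ a b c d : V, e = s(a, b) ∧ f = s(c, d) ∧ G.Adj a b ∧ G.Adj c d ∧
    G.Adj a c ∧ G.Adj b d ∧ ¬ G.Adj a d ∧ ¬ G.Adj b c ∧ a ≠ d ∧ b ≠ c

/-- The equivalence relation on edges generated by "being in a common clique or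
opposite sides of a square"; its classes are the hyperplanes. -/
def HypRel (G : SimpleGraph V) : Sym2 V → Sym2 V → Prop :=
  Relation.EqvGen fun e f =>
    e ∈ G.edgeSet ∧ f ∈ G.edgeSet ∧ (SameClique G e f ∨ OppSquare G e f)

/-- `J` is a hyperplane of `G`: the class of some edge under `HypRel`. -/
def IsHyperplane (G : SimpleGraph V) (J : Set (Sym2 V)) : Prop :=
  ∃ e ∈ G.edgeSet, J = {f | f ∈ G.edgeSet ∧ HypRel G e f}

/-- The clique `C` is contained in the hyperplane `J` (all of its edges belong to `J`;
such a clique carries at least one edge). -/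
def CliqueIn (G : SimpleGraph V) (J : Set (Sym2 V)) (C : Set V) : Prop :=
  IsMaxClique G C ∧ (∃ a b : V, a ∈ C ∧ b ∈ C ∧ a ≠ b) ∧
    ∀ a ∈ C, ∀ b ∈ C, a ≠ b → s(a, b) ∈ J

/-- The hyperplane `J` separates `a` from `b`: every walk from `a` to `b` uses an edge
of `J`. -/
def Separates (G : SimpleGraph V) (J : Set (Sym2 V)) (a b : V) : Prop :=
  ∀ p : G.Walk a b, ∃ e ∈ p.edges, e ∈ J

end QM

/-!
In a weakly modular graph, a connected set `Y` that contains its triangles and is locally convex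
is gated, with gate of `x` any vertex `y ∈ Y` nearest to `x`: a walk inside `Y` from `z` to `y`
can be straightened, by the triangle and quadrangle conditions, into a geodesic of `Y` that
extends to a geodesic from `z` to `x` through `y`.

It remains to check these properties for `N(J)`. The two maximal cliques spanned by opposite sides
of an induced square are matched by adjacency, and the gates of any vertex in them are adjacent
(otherwise the quadrangle condition produces an induced `K_{3,2}`). Hence two vertices have the
same gate in one maximal clique of `J` iff they have the same gate in any other. With this
coherence, a triangle or a square with enough corners in `N(J)` is completed to an induced square
with one side in a clique of `J`, so that the opposite side is an edge of `J`.
-/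

namespace QM

variable {G : SimpleGraph V} {J : Set (Sym2 V)}

lemma dist_le_dist_add_one_of_adj {v w : V} (h : G.Adj v w) (u : V) :
    G.dist u w ≤ G.dist u v + 1 :=
  (h.reachable.dist_triangle_right u).trans_eq (by rw [SimpleGraph.dist_eq_one_iff_adj.mpr h])

lemma dist_eq_two_of_adj_of_adj {u v w : V} (huv : G.Adj u v) (hvw : G.Adj v w) (huw : u ≠ w)
    (hnadj : ¬ G.Adj u w) : G.dist u w = 2 := by
  have hle : G.dist u w ≤ 2 := SimpleGraph.dist_le (.cons huv (.cons hvw .nil))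
  have hlt : 1 < G.dist u w :=
    (huv.reachable.trans hvw.reachable).one_lt_dist_of_ne_of_not_adj huw hnadj
  omega

lemma exists_nearest (x : V) {Y : Set V} (hY : Y.Nonempty) :
    ∃ y ∈ Y, ∀ z ∈ Y, G.dist x y ≤ G.dist x z :=
  ⟨_, Function.argminOn_mem _ Y hY, fun _ hz => Function.argminOn_le (G.dist x) Y hz⟩

lemma eq_or_adj_of_mem_edgeSet {e : Sym2 V} (he : e ∈ G.edgeSet) {u v : V} (hu : u ∈ e)
    (hv : v ∈ e) : u = v ∨ G.Adj u v := by
  induction e using Sym2.ind with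
  | _ a b =>
    rcases Sym2.mem_iff.mp hu with rfl | rfl <;> rcases Sym2.mem_iff.mp hv with rfl | rfl
    exacts [.inl rfl, .inr he, .inr he.symm, .inl rfl]

lemma reachable_induce_of_eq_or_adj {Y : Set V} {u v : V} (hu : u ∈ Y) (hv : v ∈ Y)
    (h : u = v ∨ G.Adj u v) : (G.induce Y).Reachable ⟨u, hu⟩ ⟨v, hv⟩ := by
  rcases h with rfl | h
  · rfl
  · exact SimpleGraph.Adj.reachable (G := G.induce Y) h

def ContainsTriangles (G : SimpleGraph V) (Y : Set V) : Prop :=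
  ∀ ⦃a b t : V⦄, a ∈ Y → b ∈ Y → G.Adj a b → G.Adj t a → G.Adj t b → t ∈ Y

def LocallyConvex (G : SimpleGraph V) (Y : Set V) : Prop :=
  ∀ ⦃u v w t : V⦄, u ∈ Y → v ∈ Y → w ∈ Y → u ≠ v → ¬ G.Adj u v →
    G.Adj w u → G.Adj w v → G.Adj t u → G.Adj t v → t ∈ Y

section Criterion

variable {Y : Set V}

lemma dist_le_length_induce {u v : Y} (p : (G.induce Y).Walk u v) : G.dist u v ≤ p.length :=
  (G.dist_le (p.map (SimpleGraph.Embedding.induce Y).toHom)).trans_eq (p.length_map _)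

lemma exists_walk_of_adj_of_dist_add_one_eq (hconn : G.Connected)
    (hquad : QuadrangleCondition G) (htY : ContainsTriangles G Y) (hlY : LocallyConvex G Y)
    {x : V} {y z w : Y} (hmin : ∀ z ∈ Y, G.dist x y ≤ G.dist x z) (hzw : G.Adj z w)
    (hxzw : G.dist x z + 1 = G.dist x w) (qw : (G.induce Y).Walk w y)
    (hqw : qw.length + G.dist x y = G.dist x w)
    (ih : ∀ (s : Y) (r : (G.induce Y).Walk s y), r.length ≤ qw.length →
      ∃ q : (G.induce Y).Walk s y, q.length + G.dist x y = G.dist x s) :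
    ∃ q : (G.induce Y).Walk z y, q.length + G.dist x y = G.dist x z := by
  cases qw with
  | nil =>
    have := hmin z z.2
    simp only [SimpleGraph.Walk.length_nil] at hqw
    omega
  | @cons _ w₂ _ hww₂' r₂ =>
    have hww₂ : G.Adj w w₂ := hww₂'
    simp only [SimpleGraph.Walk.length_cons] at hqw ih
    have := dist_le_dist_add_one_of_adj hww₂.symm x
    have := dist_le_length_induce r₂
    have := hconn.dist_triangle (u := x) (v := y) (w := w₂)
    have := G.dist_comm (u := y) (v := w₂)
    obtain rfl | hzw₂ := eq_or_ne z w₂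
    · exact ⟨r₂, by omega⟩
    have hzw₂' : (z : V) ≠ w₂ := fun h => hzw₂ (Subtype.ext h)
    obtain ⟨s, hzs, hw₂s, hxs⟩ :=
      hquad x w z w₂ hzw.symm hww₂ hzw₂' (by omega) (by omega)
    have hsY : s ∈ Y := by
      by_cases hadj : G.Adj z w₂
      · exact htY z.2 w₂.2 hadj hzs.symm hw₂s.symm
      · exact hlY z.2 w₂.2 w.2 hzw₂' hadj hzw.symm hww₂ hzs.symm hw₂s.symm
    obtain ⟨qs, hqs⟩ := ih ⟨s, hsY⟩
      (.cons (show (G.induce Y).Adj ⟨s, hsY⟩ w₂ from hw₂s.symm) r₂) le_rfl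
    dsimp only at hqs
    exact ⟨.cons (show (G.induce Y).Adj z ⟨s, hsY⟩ from hzs) qs,
      by simp only [SimpleGraph.Walk.length_cons]; omega⟩

lemma exists_walk_length_add_dist_eq (hconn : G.Connected) (htri : TriangleCondition G)
    (hquad : QuadrangleCondition G) (htY : ContainsTriangles G Y) (hlY : LocallyConvex G Y)
    {x : V} {y : Y} (hmin : ∀ z ∈ Y, G.dist x y ≤ G.dist x z) (n : ℕ) :
    ∀ (z : Y) (p : (G.induce Y).Walk z y), p.length ≤ n →
      ∃ q : (G.induce Y).Walk z y, q.length + G.dist x y = G.dist x z := by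
  induction n using Nat.strong_induction_on with | _ n ihn => ?_
  intro z
  induction hk : G.dist x z using Nat.strong_induction_on generalizing z with | _ k ihk => ?_
  intro p hp
  cases p with
  | nil => exact ⟨.nil, by simp [hk]⟩
  | @cons _ w _ hzw' r =>
    have hzw : G.Adj z w := hzw'
    simp only [SimpleGraph.Walk.length_cons] at hp
    have := dist_le_dist_add_one_of_adj hzw x
    have := dist_le_dist_add_one_of_adj hzw.symm x
    obtain ⟨qw, hqw⟩ := ihn r.length (by omega) w r le_rfl
    rcases (by omega : G.dist x z = G.dist x w + 1 ∨ G.dist x z = G.dist x w ∨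
      G.dist x z + 1 = G.dist x w) with hfar | hlevel | hnear
    · exact ⟨.cons hzw' qw, by simp only [SimpleGraph.Walk.length_cons]; omega⟩
    · obtain ⟨s, hzs, hws, hxs⟩ := htri x z w hzw hlevel
      have hsY : s ∈ Y := htY z.2 w.2 hzw hzs.symm hws.symm
      obtain ⟨qs, hqs⟩ := ihk (G.dist x s) (by omega) ⟨s, hsY⟩ rfl
        (.cons (show (G.induce Y).Adj ⟨s, hsY⟩ w from hws.symm) r)
        (by simp only [SimpleGraph.Walk.length_cons]; omega)
      exact ⟨.cons (show (G.induce Y).Adj z ⟨s, hsY⟩ from hzs) qs,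
        by simp only [SimpleGraph.Walk.length_cons]; omega⟩
    · have := dist_le_length_induce r
      have := hconn.dist_triangle (u := x) (v := y) (w := w)
      have := G.dist_comm (u := y) (v := w)
      rw [← hk]
      exact exists_walk_of_adj_of_dist_add_one_eq hconn hquad htY hlY hmin hzw hnear qw hqw
        fun s r' hr' => ihn r'.length (by omega) s r' le_rfl

theorem gated_of_locallyConvex (hconn : G.Connected) (htri : TriangleCondition G)
    (hquad : QuadrangleCondition G) (hne : Y.Nonempty) (hpre : (G.induce Y).Preconnected)
    (htY : ContainsTriangles G Y) (hlY : LocallyConvex G Y) : Gated G Y := by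
  intro x
  obtain ⟨y, hy, hmin⟩ := exists_nearest (G := G) x hne
  refine ⟨y, hy, fun z hz => ?_⟩
  obtain ⟨p⟩ := hpre ⟨z, hz⟩ ⟨y, hy⟩
  obtain ⟨q, hq⟩ := exists_walk_length_add_dist_eq hconn htri hquad htY hlY (y := ⟨y, hy⟩)
    hmin p.length ⟨z, hz⟩ p le_rfl
  have hqz := dist_le_length_induce q
  dsimp only at hq hqz
  have := hconn.dist_triangle (u := x) (v := y) (w := z)
  have := G.dist_comm (u := y) (v := z)
  omega

end Criterion

lemma edgeOf_mk_iff {C : Set V} {a b : V} : EdgeOf C s(a, b) ↔ a ∈ C ∧ b ∈ C := by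
  simp [EdgeOf]

section MaxClique

variable {C D : Set V}

lemma exists_isMaxClique_superset (hC : G.IsClique C) : ∃ D, IsMaxClique G D ∧ C ⊆ D := by
  obtain ⟨D, hCD, hD⟩ := zorn_subset_nonempty {D : Set V | G.IsClique D}
    (fun c hc hchain _ => ⟨⋃₀ c, (G.isClique_sUnion hchain.directedOn).mpr hc,
      fun _ => Set.subset_sUnion_of_mem⟩) C hC
  exact ⟨D, ⟨hD.prop, fun E hE hDE => hD.eq_of_le hE hDE⟩, hCD⟩

lemma IsMaxClique.mem_of_adj_of_adj (hk4 : NoK4Minus G) (hC : IsMaxClique G C) {p q t : V}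
    (hp : p ∈ C) (hq : q ∈ C) (hpq : p ≠ q) (htp : G.Adj t p) (htq : G.Adj t q) :
    t ∈ C := by
  by_contra ht
  obtain ⟨c, hc, hnadj⟩ : ∃ c ∈ C, ¬ G.Adj t c := by
    by_contra! hall
    exact ht (hC.2 _ (hC.1.insert fun c hc _ => hall c hc) (Set.subset_insert t C) ▸
      Set.mem_insert t C)
  exact hk4 ⟨t, c, p, q, fun h => ht (h ▸ hc), hC.1 hp hq hpq, htp, htq,
    hC.1 hc hp (by rintro rfl; exact hnadj htp), hC.1 hc hq (by rintro rfl; exact hnadj htq),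
    hnadj⟩

lemma IsMaxClique.eq_of_mem (hk4 : NoK4Minus G) (hC : IsMaxClique G C) (hD : IsMaxClique G D)
    {a b : V} (hab : a ≠ b) (haC : a ∈ C) (hbC : b ∈ C) (haD : a ∈ D) (hbD : b ∈ D) :
    C = D :=
  hC.2 D hD.1 fun u hu => by
    obtain rfl | hua := eq_or_ne u a
    · exact haD
    obtain rfl | hub := eq_or_ne u b
    · exact hbD
    exact hD.mem_of_adj_of_adj hk4 haD hbD hab (hC.1 hu haC hua) (hC.1 hu hbC hub)

lemma IsMaxClique.eq_of_edgeOf (hk4 : NoK4Minus G) {f : Sym2 V} (hf : f ∈ G.edgeSet)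
    (hC : IsMaxClique G C) (hfC : EdgeOf C f) (hD : IsMaxClique G D) (hfD : EdgeOf D f) :
    C = D := by
  induction f using Sym2.ind with
  | _ a b =>
    rw [edgeOf_mk_iff] at hfC hfD
    exact hC.eq_of_mem hk4 hD (G.ne_of_adj hf) hfC.1 hfC.2 hfD.1 hfD.2

lemma exists_isMaxClique_edgeOf {f : Sym2 V} (hf : f ∈ G.edgeSet) :
    ∃ C, IsMaxClique G C ∧ EdgeOf C f := by
  induction f using Sym2.ind with
  | _ a b =>
    obtain ⟨C, hC, habC⟩ := exists_isMaxClique_superset (G.isClique_pair.mpr fun _ => hf)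
    exact ⟨C, hC, edgeOf_mk_iff.mpr ⟨habC (by simp), habC (by simp)⟩⟩

lemma IsMaxClique.nonempty (hC : IsMaxClique G C) (x : V) : C.Nonempty := by
  by_contra h
  rw [Set.not_nonempty_iff_eq_empty] at h
  subst h
  exact Set.singleton_ne_empty x (hC.2 {x} (G.isClique_singleton x) (Set.empty_subset _)).symm

end MaxClique

section Gate

variable {C : Set V} {x g z : V}

lemma IsGate.dist_le {Y : Set V} (h : IsGate G Y x g) (hz : z ∈ Y) :
    G.dist x g ≤ G.dist x z := by
  rw [h.2 z hz]
  omega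

lemma isGate_self {Y : Set V} (hz : z ∈ Y) : IsGate G Y z z :=
  ⟨hz, fun w _ => by simp⟩

lemma IsGate.dist_eq_add_one (hC : G.IsClique C) (h : IsGate G C x g) (hz : z ∈ C)
    (hzg : z ≠ g) : G.dist x z = G.dist x g + 1 := by
  rw [h.2 z hz, SimpleGraph.dist_eq_one_iff_adj.mpr (hC h.1 hz hzg.symm)]

lemma isGate_of_isClique (hC : G.IsClique C) (hg : g ∈ C)
    (h : ∀ z ∈ C, z ≠ g → G.dist x z = G.dist x g + 1) : IsGate G C x g := by
  refine ⟨hg, fun z hz => ?_⟩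
  obtain rfl | hzg := eq_or_ne z g
  · simp
  · rw [h z hz hzg, SimpleGraph.dist_eq_one_iff_adj.mpr (hC hg hz hzg.symm)]

lemma IsGate.eq_of_isClique (hC : G.IsClique C) {g' : V} (h : IsGate G C x g)
    (h' : IsGate G C x g') : g = g' := by
  by_contra hne
  have := h.dist_eq_add_one hC h'.1 (Ne.symm hne)
  have := h'.dist_eq_add_one hC h.1 hne
  omega

lemma IsMaxClique.isGate_of_adj (hk4 : NoK4Minus G) (hC : IsMaxClique G C) {u : V}
    (hg : g ∈ C) (hu : u ∉ C) (hug : G.Adj u g) : IsGate G C u g :=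
  isGate_of_isClique hC.1 hg fun z hz hzg => by
    have hnadj : ¬ G.Adj u z := fun huz => hu (hC.mem_of_adj_of_adj hk4 hg hz hzg.symm hug huz)
    rw [dist_eq_two_of_adj_of_adj hug (hC.1 hg hz hzg.symm) (fun h => hu (h ▸ hz)) hnadj,
      SimpleGraph.dist_eq_one_iff_adj.mpr hug]

lemma IsGate.not_adj_of_ne (hC : G.IsClique C) (h : IsGate G C x g) (hxg : x ≠ g) (hz : z ∈ C)
    (hzg : z ≠ g) : ¬ G.Adj x z := fun hxz => by
  have hdist := h.dist_eq_add_one hC hz hzg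
  rw [SimpleGraph.dist_eq_one_iff_adj.mpr hxz] at hdist
  exact hxg ((hxz.reachable.trans (hC hz h.1 hzg).reachable).dist_eq_zero_iff.mp (by omega))

lemma IsMaxClique.gated (htri : TriangleCondition G) (hk4 : NoK4Minus G)
    (hC : IsMaxClique G C) : Gated G C := by
  intro x
  obtain ⟨g, hg, hmin⟩ := exists_nearest (G := G) x (hC.nonempty x)
  refine ⟨g, isGate_of_isClique hC.1 hg fun z hz hzg => ?_⟩
  have hgz : G.Adj g z := hC.1 hg hz hzg.symm
  have := dist_le_dist_add_one_of_adj hgz x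
  have := hmin z hz
  suffices G.dist x z ≠ G.dist x g by omega
  intro heq
  obtain ⟨t, hzt, hgt, hxt⟩ := htri x z g hgz.symm heq
  have := hmin t (hC.mem_of_adj_of_adj hk4 hz hg hzg hzt.symm hgt.symm)
  omega

lemma IsMaxClique.isGate_of_forall_not_adj (htri : TriangleCondition G) (hk4 : NoK4Minus G)
    (hC : IsMaxClique G C) (hg : g ∈ C) (hxg : G.dist x g = 2)
    (hno : ∀ z ∈ C, z ≠ g → ¬ G.Adj x z) : IsGate G C x g := by
  obtain ⟨g', hg'⟩ := hC.gated htri hk4 x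
  obtain rfl | hg'g := eq_or_ne g' g
  · exact hg'
  have := hg'.dist_eq_add_one hC.1 hg hg'g.symm
  exact absurd (SimpleGraph.dist_eq_one_iff_adj.mp (by omega)) (hno g' hg'.1 hg'g)

def SameGate (G : SimpleGraph V) (C : Set V) (ρ σ : V) : Prop :=
  ∃ g, IsGate G C ρ g ∧ IsGate G C σ g

lemma IsGate.sameGate_iff (hC : G.IsClique C) {ρ σ p q : V} (hρ : IsGate G C ρ p)
    (hσ : IsGate G C σ q) : SameGate G C ρ σ ↔ p = q :=
  ⟨fun ⟨_, hρg, hσg⟩ => (hρ.eq_of_isClique hC hρg).trans (hσg.eq_of_isClique hC hσ),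
    fun h => ⟨p, hρ, h ▸ hσ⟩⟩

end Gate

structure Matched (G : SimpleGraph V) (C D : Set V) : Prop where
  isMaxClique_left : IsMaxClique G C
  isMaxClique_right : IsMaxClique G D
  disjoint : Disjoint C D
  exists_adj_left : ∀ u ∈ C, ∃ v ∈ D, G.Adj u v
  exists_adj_right : ∀ v ∈ D, ∃ u ∈ C, G.Adj v u

namespace Matched

variable {C D : Set V}

lemma symm (h : Matched G C D) : Matched G D C :=
  ⟨h.2, h.1, h.disjoint.symm, h.exists_adj_right, h.exists_adj_left⟩

lemma eq_of_adj (hk4 : NoK4Minus G) (hM : Matched G C D) {u v v' : V} (hu : u ∈ C)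
    (hv : v ∈ D) (hv' : v' ∈ D) (huv : G.Adj u v) (huv' : G.Adj u v') : v = v' := by
  by_contra hne
  exact Set.disjoint_left.mp hM.disjoint hu
    (hM.isMaxClique_right.mem_of_adj_of_adj hk4 hv hv' hne huv huv')

lemma adj_of_isGate (hquad : QuadrangleCondition G) (hk4 : NoK4Minus G) (hk32 : NoK32 G)
    (hM : Matched G C D) {x p q : V} (hp : IsGate G C x p) (hq : IsGate G D x q) :
    G.Adj p q := by
  have hC := hM.isMaxClique_left
  have hD := hM.isMaxClique_right
  by_contra hpq
  obtain ⟨v, hv, hpv⟩ := hM.exists_adj_left p hp.1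
  obtain ⟨u, hu, hqu⟩ := hM.exists_adj_right q hq.1
  have hvq : v ≠ q := by rintro rfl; exact hpq hpv
  have hup : u ≠ p := by rintro rfl; exact hpq hqu.symm
  have hp_ne_q : p ≠ q := fun h => Set.disjoint_left.mp hM.disjoint hp.1 (h ▸ hq.1)
  have hup' : G.Adj u p := hC.1 hu hp.1 hup
  have hxu := hp.dist_eq_add_one hC.1 hu hup
  have hxv := hq.dist_eq_add_one hD.1 hv hvq
  have := dist_le_dist_add_one_of_adj hqu x
  have := dist_le_dist_add_one_of_adj hpv x
  obtain ⟨s, hps, hqs, hxs⟩ := hquad x u p q hup' hqu.symm hp_ne_q (by omega) (by omega)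
  refine hk32 ⟨u, v, s, p, q, ?_, ?_, ?_, hp_ne_q, hup', hqu.symm, hpv.symm,
    hD.1 hv hq.1 hvq, hps.symm, hqs.symm, ?_, ?_, ?_, hpq⟩
  · rintro rfl
    exact Set.disjoint_left.mp hM.disjoint hu hv
  · rintro rfl
    omega
  · rintro rfl
    omega
  · exact fun huv => hvq (hM.eq_of_adj hk4 hu hv hq.1 huv hqu.symm)
  · intro hus
    have := hp.dist_le (hC.mem_of_adj_of_adj hk4 hu hp.1 hup hus.symm hps.symm)
    omega
  · intro hvs
    have := hq.dist_le (hD.mem_of_adj_of_adj hk4 hv hq.1 hvq hvs.symm hqs.symm)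
    omega

lemma sameGate_of_sameGate (htri : TriangleCondition G) (hquad : QuadrangleCondition G)
    (hk4 : NoK4Minus G) (hk32 : NoK32 G) (hM : Matched G C D) {ρ σ : V}
    (h : SameGate G C ρ σ) : SameGate G D ρ σ := by
  obtain ⟨p, hρ, hσ⟩ := h
  obtain ⟨q, hq⟩ := hM.isMaxClique_right.gated htri hk4 ρ
  obtain ⟨q', hq'⟩ := hM.isMaxClique_right.gated htri hk4 σ
  have hqq' : q = q' := hM.eq_of_adj hk4 hρ.1 hq.1 hq'.1
    (hM.adj_of_isGate hquad hk4 hk32 hρ hq) (hM.adj_of_isGate hquad hk4 hk32 hσ hq')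
  exact ⟨q, hq, hqq' ▸ hq'⟩

lemma sameGate_iff (htri : TriangleCondition G) (hquad : QuadrangleCondition G)
    (hk4 : NoK4Minus G) (hk32 : NoK32 G) (hM : Matched G C D) {ρ σ : V} :
    SameGate G C ρ σ ↔ SameGate G D ρ σ :=
  ⟨hM.sameGate_of_sameGate htri hquad hk4 hk32,
    hM.symm.sameGate_of_sameGate htri hquad hk4 hk32⟩

end Matched

section Square

variable {C D : Set V} {a b c d : V}

lemma exists_adj_of_square (htri : TriangleCondition G) (hk4 : NoK4Minus G)
    (hC : IsMaxClique G C) (hD : IsMaxClique G D) (ha : a ∈ C) (hb : b ∈ C) (hc : c ∈ D)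
    (hd : d ∈ D) (hcC : c ∉ C) (hdC : d ∉ C) (hac : G.Adj a c) (hbd : G.Adj b d)
    (hcd : G.Adj c d) : ∀ u ∈ C, ∃ v ∈ D, G.Adj u v := by
  intro u hu
  obtain rfl | hua := eq_or_ne u a
  · exact ⟨c, hc, hac⟩
  obtain rfl | hub := eq_or_ne u b
  · exact ⟨d, hd, hbd⟩
  have hcu := (hC.isGate_of_adj hk4 ha hcC hac.symm).dist_eq_add_one hC.1 hu hua
  have hdu := (hC.isGate_of_adj hk4 hb hdC hbd.symm).dist_eq_add_one hC.1 hu hub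
  rw [SimpleGraph.dist_eq_one_iff_adj.mpr hac.symm, SimpleGraph.dist_comm] at hcu
  rw [SimpleGraph.dist_eq_one_iff_adj.mpr hbd.symm, SimpleGraph.dist_comm] at hdu
  obtain ⟨s, hcs, hds, hus⟩ := htri u c d hcd (hcu.trans hdu.symm)
  refine ⟨s, hD.mem_of_adj_of_adj hk4 hc hd hcd.ne hcs.symm hds.symm, ?_⟩
  rw [← SimpleGraph.dist_eq_one_iff_adj]
  omega

lemma matched_of_square (htri : TriangleCondition G) (hk4 : NoK4Minus G)
    (hC : IsMaxClique G C) (hD : IsMaxClique G D) (ha : a ∈ C) (hb : b ∈ C) (hc : c ∈ D)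
    (hd : d ∈ D) (hab : G.Adj a b) (hcd : G.Adj c d) (hac : G.Adj a c) (hbd : G.Adj b d)
    (hnad : ¬ G.Adj a d) (hnbc : ¬ G.Adj b c) (had : a ≠ d) (hbc : b ≠ c) :
    Matched G C D := by
  have hcC : c ∉ C := fun h => hnbc (hC.1 hb h hbc)
  have hdC : d ∉ C := fun h => hnad (hC.1 ha h had)
  have haD : a ∉ D := fun h => hnad (hD.1 h hd had)
  have hbD : b ∉ D := fun h => hnbc (hD.1 h hc hbc)
  refine ⟨hC, hD, Set.disjoint_left.mpr fun u huC huD => ?_,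
    exists_adj_of_square htri hk4 hC hD ha hb hc hd hcC hdC hac hbd hcd,
    exists_adj_of_square htri hk4 hD hC hc hd ha hb haD hbD hac.symm hbd.symm hab⟩
  have hua : u ≠ a := fun h => haD (h ▸ huD)
  exact hcC (hC.mem_of_adj_of_adj hk4 huC ha hua (hD.1 hc huD fun h => hcC (h ▸ huC)) hac.symm)

end Square

/-- `HypRel G` is `Relation.EqvGen (HypStep G)` by definition. -/
def HypStep (G : SimpleGraph V) (e f : Sym2 V) : Prop :=
  e ∈ G.edgeSet ∧ f ∈ G.edgeSet ∧ (SameClique G e f ∨ OppSquare G e f)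

lemma HypStep.symm {e f : Sym2 V} (h : HypStep G e f) : HypStep G f e := by
  obtain ⟨he, hf, ⟨C, hC, heC, hfC⟩ |
    ⟨a, b, c, d, rfl, rfl, hab, hcd, hac, hbd, hnad, hnbc, had, hbc⟩⟩ := h
  · exact ⟨hf, he, .inl ⟨C, hC, hfC, heC⟩⟩
  · exact ⟨hf, he, .inr ⟨c, d, a, b, rfl, rfl, hcd, hab, hac.symm, hbd.symm,
      fun h => hnbc h.symm, fun h => hnad h.symm, hbc.symm, had.symm⟩⟩

lemma HypStep.exists_mem_eq_or_adj {e f : Sym2 V} (h : HypStep G e f) {v : V} (hv : v ∈ f) :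
    ∃ u ∈ e, u = v ∨ G.Adj u v := by
  obtain ⟨-, -, ⟨C, hC, heC, hfC⟩ | ⟨a, b, c, d, rfl, rfl, -, -, hac, hbd, -⟩⟩ := h
  · exact ⟨_, e.out_fst_mem, (eq_or_ne _ v).imp_right (hC.1 (heC _ e.out_fst_mem) (hfC v hv))⟩
  · rcases Sym2.mem_iff.mp hv with rfl | rfl
    exacts [⟨a, Sym2.mem_mk_left a b, .inr hac⟩, ⟨b, Sym2.mem_mk_right a b, .inr hbd⟩]

lemma sameGate_iff_of_reflTransGen (htri : TriangleCondition G)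
    (hquad : QuadrangleCondition G) (hk4 : NoK4Minus G) (hk32 : NoK32 G) {f g : Sym2 V}
    (h : Relation.ReflTransGen (HypStep G) f g) (hf : f ∈ G.edgeSet) {A B : Set V}
    (hA : IsMaxClique G A) (hfA : EdgeOf A f) (hB : IsMaxClique G B) (hgB : EdgeOf B g)
    {ρ σ : V} : SameGate G A ρ σ ↔ SameGate G B ρ σ := by
  induction h generalizing B with
  | refl => rw [hA.eq_of_edgeOf hk4 hf hfA hB hgB]
  | tail _ hstep ih =>
    obtain ⟨hgE, hg'E, hsq⟩ := hstep
    obtain ⟨C, hC, hgC⟩ := exists_isMaxClique_edgeOf hgE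
    refine (ih hC hgC).trans ?_
    rcases hsq with ⟨D, hD, hgD, hg'D⟩ |
      ⟨a, b, c, d, rfl, rfl, hab, hcd, hac, hbd, hnad, hnbc, had, hbc⟩
    · rw [hC.eq_of_edgeOf hk4 hgE hgC hD hgD, hD.eq_of_edgeOf hk4 hg'E hg'D hB hgB]
    · rw [edgeOf_mk_iff] at hgC hgB
      exact (matched_of_square htri hk4 hC hB hgC.1 hgC.2 hgB.1 hgB.2 hab hcd hac hbd hnad hnbc
        had hbc).sameGate_iff htri hquad hk4 hk32

def carrier (J : Set (Sym2 V)) : Set V := {v | ∃ e ∈ J, v ∈ e}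

lemma mem_carrier_left {a b : V} (h : s(a, b) ∈ J) : a ∈ carrier J :=
  ⟨_, h, Sym2.mem_mk_left a b⟩

lemma mem_carrier_right {a b : V} (h : s(a, b) ∈ J) : b ∈ carrier J :=
  ⟨_, h, Sym2.mem_mk_right a b⟩

namespace IsHyperplane

lemma subset_edgeSet (hJ : IsHyperplane G J) : J ⊆ G.edgeSet := by
  obtain ⟨e, -, rfl⟩ := hJ
  exact fun f hf => hf.1

lemma mem_of_hypStep (hJ : IsHyperplane G J) {f g : Sym2 V} (hf : f ∈ J) (h : HypStep G f g) :
    g ∈ J := by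
  obtain ⟨e, -, rfl⟩ := hJ
  exact ⟨h.2.1, .trans _ _ _ hf.2 (.rel _ _ h)⟩

lemma reflTransGen (hJ : IsHyperplane G J) {f g : Sym2 V} (hf : f ∈ J) (hg : g ∈ J) :
    Relation.ReflTransGen (HypStep G) f g := by
  obtain ⟨e, -, rfl⟩ := hJ
  have : Std.Symm (HypStep G) := ⟨fun _ _ => HypStep.symm⟩
  rw [← Relation.EqvGen.eqvGen_eq_reflTransGen]
  exact .trans _ _ _ (.symm _ _ hf.2) hg.2

lemma mem_of_oppSquare (hJ : IsHyperplane G J) {a b c d : V} (h : s(a, b) ∈ J)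
    (hcd : G.Adj c d) (hac : G.Adj a c) (hbd : G.Adj b d) (hnad : ¬ G.Adj a d)
    (hnbc : ¬ G.Adj b c) (had : a ≠ d) (hbc : b ≠ c) : s(c, d) ∈ J :=
  hJ.mem_of_hypStep h ⟨hJ.subset_edgeSet h, hcd,
    .inr ⟨a, b, c, d, rfl, rfl, hJ.subset_edgeSet h, hcd, hac, hbd, hnad, hnbc, had, hbc⟩⟩

lemma exists_cliqueIn (hJ : IsHyperplane G J) {a b : V} (h : s(a, b) ∈ J) :
    ∃ C, CliqueIn G J C ∧ a ∈ C ∧ b ∈ C := by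
  have hab : G.Adj a b := hJ.subset_edgeSet h
  obtain ⟨C, hC, habC⟩ := exists_isMaxClique_superset (G.isClique_pair.mpr fun _ => hab)
  have ha : a ∈ C := habC (by simp)
  have hb : b ∈ C := habC (by simp)
  refine ⟨C, ⟨hC, ⟨a, b, ha, hb, hab.ne⟩, fun u hu v hv huv => ?_⟩, ha, hb⟩
  exact hJ.mem_of_hypStep h ⟨hab, hC.1 hu hv huv,
    .inl ⟨C, hC, edgeOf_mk_iff.mpr ⟨ha, hb⟩, edgeOf_mk_iff.mpr ⟨hu, hv⟩⟩⟩

lemma carrier_nonempty (hJ : IsHyperplane G J) : (carrier J).Nonempty := by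
  obtain ⟨e, he, rfl⟩ := hJ
  exact ⟨e.out.1, e, ⟨he, .refl _⟩, Sym2.out_fst_mem e⟩

lemma exists_cliqueIn_of_mem_carrier (hJ : IsHyperplane G J) {v : V} (hv : v ∈ carrier J) :
    ∃ A, CliqueIn G J A ∧ v ∈ A := by
  obtain ⟨e, he, hve⟩ := hv
  obtain ⟨w, rfl⟩ := Sym2.mem_iff_exists.mp hve
  obtain ⟨A, hA, hvA, -⟩ := hJ.exists_cliqueIn he
  exact ⟨A, hA, hvA⟩

end IsHyperplane

namespace CliqueIn

variable {A B W : Set V}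

lemma exists_ne (hA : CliqueIn G J A) (a : V) : ∃ a' ∈ A, a' ≠ a := by
  obtain ⟨b, c, hb, hc, hbc⟩ := hA.2.1
  obtain rfl | hba := eq_or_ne b a
  · exact ⟨c, hc, hbc.symm⟩
  · exact ⟨b, hb, hba⟩

lemma subset_carrier (hA : CliqueIn G J A) : A ⊆ carrier J := fun a ha => by
  obtain ⟨a', ha', ha'a⟩ := hA.exists_ne a
  exact ⟨s(a, a'), hA.2.2 a ha a' ha' ha'a.symm, Sym2.mem_mk_left a a'⟩

lemma gate_eq_iff (hJ : IsHyperplane G J) (htri : TriangleCondition G)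
    (hquad : QuadrangleCondition G) (hk4 : NoK4Minus G) (hk32 : NoK32 G)
    (hA : CliqueIn G J A) (hB : CliqueIn G J B) {ρ σ p p' q q' : V} (hp : IsGate G A ρ p)
    (hp' : IsGate G A σ p') (hq : IsGate G B ρ q) (hq' : IsGate G B σ q') :
    p = p' ↔ q = q' := by
  obtain ⟨a, a', ha, ha', haa'⟩ := hA.2.1
  obtain ⟨b, b', hb, hb', hbb'⟩ := hB.2.1
  have haJ := hA.2.2 a ha a' ha' haa'
  have hcoh := sameGate_iff_of_reflTransGen htri hquad hk4 hk32
    (hJ.reflTransGen haJ (hB.2.2 b hb b' hb' hbb')) (hJ.subset_edgeSet haJ) hA.1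
    (edgeOf_mk_iff.mpr ⟨ha, ha'⟩) hB.1 (edgeOf_mk_iff.mpr ⟨hb, hb'⟩) (ρ := ρ) (σ := σ)
  rwa [hp.sameGate_iff hA.1.1 hp', hq.sameGate_iff hB.1.1 hq'] at hcoh

/-- `t h` is opposite to `a a'` in an induced square. -/
lemma mk_mem_of_adj_of_adj (hJ : IsHyperplane G J) (hk4 : NoK4Minus G) (hA : CliqueIn G J A)
    {a a' t h : V} (ha : a ∈ A) (ha' : a' ∈ A) (haa' : a ≠ a') (ht : t ∉ A)
    (hta : G.Adj t a) (hth : G.Adj t h) (hha' : G.Adj h a') (hha : h ≠ a) : s(t, h) ∈ J := by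
  have hta' : ¬ G.Adj t a' := fun h' => ht (hA.1.mem_of_adj_of_adj hk4 ha ha' haa' hta h')
  have hah : ¬ G.Adj a h := fun hah => ht (hA.1.mem_of_adj_of_adj hk4 ha
    (hA.1.mem_of_adj_of_adj hk4 ha ha' haa' hah.symm hha') hha.symm hta hth)
  exact hJ.mem_of_oppSquare (hA.2.2 a ha a' ha' haa') hth hta.symm hha'.symm hah
    (fun h' => hta' h'.symm) hha.symm (fun h' => ht (h' ▸ ha'))

lemma isGate_of_isGate (hJ : IsHyperplane G J) (htri : TriangleCondition G)
    (hquad : QuadrangleCondition G) (hk4 : NoK4Minus G) (hk32 : NoK32 G)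
    (hW : CliqueIn G J W) (hA : CliqueIn G J A) {ρ σ g : V} (hρ : IsGate G W ρ g)
    (hσ : IsGate G W σ g) (hσA : σ ∈ A) : IsGate G A ρ σ := by
  obtain ⟨g', hg'⟩ := hA.1.gated htri hk4 ρ
  rwa [(hW.gate_eq_iff hJ htri hquad hk4 hk32 hA hρ hσ hg' (isGate_self hσA)).mp rfl] at hg'

lemma gate_ne_and_adj (hJ : IsHyperplane G J) (htri : TriangleCondition G)
    (hquad : QuadrangleCondition G) (hk4 : NoK4Minus G) (hk32 : NoK32 G)
    (hA : CliqueIn G J A) (hB : CliqueIn G J B) {a a' b b' : V} (ha : a ∈ A) (ha' : a' ∈ A)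
    (ha'a : a' ≠ a) (hb : b ∈ B) (hab : G.Adj a b) (haB : a ∉ B) (hbA : b ∉ A)
    (hb' : IsGate G B a' b') : b' ≠ b ∧ G.Adj a' b' := by
  have hb'b : b' ≠ b := fun h => ha'a ((hA.gate_eq_iff hJ htri hquad hk4 hk32 hB
    (isGate_self ha') (isGate_self ha) hb' (hB.1.isGate_of_adj hk4 hb haB hab)).mpr h)
  have hba' := (hA.1.isGate_of_adj hk4 ha hbA hab.symm).dist_eq_add_one hA.1.1 ha' ha'a
  have ha'b := hb'.dist_eq_add_one hB.1.1 hb hb'b.symm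
  rw [SimpleGraph.dist_eq_one_iff_adj.mpr hab.symm, SimpleGraph.dist_comm] at hba'
  exact ⟨hb'b, SimpleGraph.dist_eq_one_iff_adj.mp (by omega)⟩

end CliqueIn

namespace IsHyperplane

lemma carrier_containsTriangles (hJ : IsHyperplane G J) (htri : TriangleCondition G)
    (hquad : QuadrangleCondition G) (hk4 : NoK4Minus G) (hk32 : NoK32 G) :
    ContainsTriangles G (carrier J) := by
  intro a b t ha hb hab hta htb
  by_cases hJab : s(a, b) ∈ J
  · obtain ⟨C, hC, haC, hbC⟩ := hJ.exists_cliqueIn hJab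
    exact hC.subset_carrier (hC.1.mem_of_adj_of_adj hk4 haC hbC hab.ne hta htb)
  obtain ⟨A, hA, haA⟩ := hJ.exists_cliqueIn_of_mem_carrier ha
  obtain ⟨B, hB, hbB⟩ := hJ.exists_cliqueIn_of_mem_carrier hb
  by_cases htA : t ∈ A
  · exact hA.subset_carrier htA
  by_cases htB : t ∈ B
  · exact hB.subset_carrier htB
  have hbA : b ∉ A := fun h => hJab (hA.2.2 a haA b h hab.ne)
  have haB : a ∉ B := fun h => hJab (hB.2.2 a h b hbB hab.ne)
  obtain ⟨a', ha', ha'a⟩ := hA.exists_ne a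
  obtain ⟨v, hv⟩ := hB.1.gated htri hk4 a'
  obtain ⟨hvb, ha'v⟩ :=
    hA.gate_ne_and_adj hJ htri hquad hk4 hk32 hB haA ha' ha'a hbB hab haB hbA hv
  have hta' := (hA.1.isGate_of_adj hk4 haA htA hta).dist_eq_add_one hA.1.1 ha' ha'a
  have htv := (hB.1.isGate_of_adj hk4 hbB htB htb).dist_eq_add_one hB.1.1 hv.1 hvb
  rw [SimpleGraph.dist_eq_one_iff_adj.mpr hta] at hta'
  rw [SimpleGraph.dist_eq_one_iff_adj.mpr htb] at htv
  obtain ⟨s, ha's, hvs, hts⟩ := htri t a' v ha'v (hta'.trans htv.symm)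
  have hsa : s ≠ a := by
    rintro rfl
    exact haB (hB.1.mem_of_adj_of_adj hk4 hbB hv.1 hvb.symm hab hvs.symm)
  have hts' : G.Adj t s := SimpleGraph.dist_eq_one_iff_adj.mp (by omega)
  exact mem_carrier_left
    (hA.mk_mem_of_adj_of_adj hJ hk4 haA ha' ha'a.symm htA hta hts' ha's.symm hsa)

lemma mem_carrier_of_square (hJ : IsHyperplane G J) (htri : TriangleCondition G)
    (hquad : QuadrangleCondition G) (hk4 : NoK4Minus G) (hk32 : NoK32 G) {a b w t : V}
    (ha : a ∈ carrier J) (hb : b ∈ carrier J) (hw : w ∈ carrier J) (hwa : G.Adj w a)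
    (hwb : G.Adj w b) (hab : a ≠ b) (hnab : ¬ G.Adj a b) (hta : G.Adj t a) (htb : G.Adj t b)
    (htw : t ≠ w) (hntw : ¬ G.Adj t w) (hJwa : s(w, a) ∉ J) (hJwb : s(w, b) ∉ J) :
    t ∈ carrier J := by
  obtain ⟨W, hW, hwW⟩ := hJ.exists_cliqueIn_of_mem_carrier hw
  obtain ⟨A, hA, haA⟩ := hJ.exists_cliqueIn_of_mem_carrier ha
  obtain ⟨B, hB, hbB⟩ := hJ.exists_cliqueIn_of_mem_carrier hb
  by_cases htA : t ∈ A
  · exact hA.subset_carrier htA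
  by_cases htB : t ∈ B
  · exact hB.subset_carrier htB
  have haW : a ∉ W := fun h => hJwa (hW.2.2 w hwW a h hwa.ne)
  have hbW : b ∉ W := fun h => hJwb (hW.2.2 w hwW b h hwb.ne)
  have hwA : w ∉ A := fun h => hJwa (Sym2.eq_swap ▸ hA.2.2 a haA w h hwa.ne')
  have hwB : w ∉ B := fun h => hJwb (Sym2.eq_swap ▸ hB.2.2 b hbB w h hwb.ne')
  by_cases hexW : ∃ u ∈ W, u ≠ w ∧ G.Adj t u
  · obtain ⟨u, hu, huw, htu⟩ := hexW
    exact mem_carrier_right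
      (hW.mk_mem_of_adj_of_adj hJ hk4 hwW hu huw.symm haW hwa.symm hta.symm htu htw)
  push Not at hexW
  have hdtw := dist_eq_two_of_adj_of_adj hta hwa.symm htw hntw
  have htW := hW.1.isGate_of_forall_not_adj htri hk4 hwW hdtw hexW
  have haW' := hW.1.isGate_of_adj hk4 hwW haW hwa.symm
  have hbW' := hW.1.isGate_of_adj hk4 hwW hbW hwb.symm
  have hbA' := hW.isGate_of_isGate hJ htri hquad hk4 hk32 hA hbW' haW' haA
  have haB' := hW.isGate_of_isGate hJ htri hquad hk4 hk32 hB haW' hbW' hbB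
  obtain ⟨w', hw', hw'w⟩ := hW.exists_ne w
  obtain ⟨a₁, ha₁⟩ := hA.1.gated htri hk4 w'
  obtain ⟨b₁, hb₁⟩ := hB.1.gated htri hk4 w'
  obtain ⟨ha₁a, hw'a₁⟩ :=
    hW.gate_ne_and_adj hJ htri hquad hk4 hk32 hA hwW hw' hw'w haA hwa hwA haW ha₁
  obtain ⟨hb₁b, hw'b₁⟩ :=
    hW.gate_ne_and_adj hJ htri hquad hk4 hk32 hB hwW hw' hw'w hbB hwb hwB hbW hb₁
  have hdtw' := htW.dist_eq_add_one hW.1.1 hw' hw'w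
  have hdta₁ := (hA.1.isGate_of_adj hk4 haA htA hta).dist_eq_add_one hA.1.1 ha₁.1 ha₁a
  have hdtb₁ := (hB.1.isGate_of_adj hk4 hbB htB htb).dist_eq_add_one hB.1.1 hb₁.1 hb₁b
  rw [SimpleGraph.dist_eq_one_iff_adj.mpr hta] at hdta₁
  rw [SimpleGraph.dist_eq_one_iff_adj.mpr htb] at hdtb₁
  have ha₁b₁ : a₁ ≠ b₁ := by
    rintro rfl
    exact hbA'.not_adj_of_ne hA.1.1 hab.symm ha₁.1 ha₁a (hB.1.1 hbB hb₁.1 hb₁b.symm)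
  obtain ⟨h, ha₁h, hb₁h, hth⟩ :=
    hquad t w' a₁ b₁ hw'a₁ hw'b₁ ha₁b₁ (by omega) (by omega)
  have hth' : G.Adj t h := SimpleGraph.dist_eq_one_iff_adj.mp (by omega)
  have hha : h ≠ a := by
    rintro rfl
    exact haB'.not_adj_of_ne hB.1.1 hab hb₁.1 hb₁b hb₁h.symm
  exact mem_carrier_left
    (hA.mk_mem_of_adj_of_adj hJ hk4 haA ha₁.1 ha₁a.symm htA hta hth' ha₁h.symm hha)

lemma carrier_locallyConvex (hJ : IsHyperplane G J) (htri : TriangleCondition G)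
    (hquad : QuadrangleCondition G) (hk4 : NoK4Minus G) (hk32 : NoK32 G) :
    LocallyConvex G (carrier J) := by
  intro u v w t hu hv hw huv hnuv hwu hwv htu htv
  obtain rfl | htw := eq_or_ne t w
  · exact hw
  by_cases hntw : G.Adj t w
  · exact hJ.carrier_containsTriangles htri hquad hk4 hk32 hu hw hwu.symm htu hntw
  by_cases hJwu : s(w, u) ∈ J
  · exact mem_carrier_right (hJ.mem_of_oppSquare hJwu htv.symm hwv htu.symm
      (fun h => hntw h.symm) hnuv htw.symm huv)
  by_cases hJwv : s(w, v) ∈ J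
  · exact mem_carrier_right (hJ.mem_of_oppSquare hJwv htu.symm hwu htv.symm
      (fun h => hntw h.symm) (fun h => hnuv h.symm) htw.symm huv.symm)
  exact hJ.mem_carrier_of_square htri hquad hk4 hk32 hu hv hw hwu hwv huv hnuv htu htv htw
    hntw hJwu hJwv

lemma induce_carrier_preconnected (hJ : IsHyperplane G J) :
    (G.induce (carrier J)).Preconnected := by
  rintro ⟨u, e, he, hue⟩ ⟨v, f, hf, hvf⟩
  induction hJ.reflTransGen he hf generalizing v with
  | refl =>
    exact reachable_induce_of_eq_or_adj _ _
      (eq_or_adj_of_mem_edgeSet (hJ.subset_edgeSet he) hue hvf)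
  | tail _ hstep ih =>
    obtain ⟨w, hwg, hwv⟩ := hstep.exists_mem_eq_or_adj hvf
    exact (ih w (hJ.mem_of_hypStep hf hstep.symm) hwg).trans
      (reachable_induce_of_eq_or_adj _ _ hwv)

end IsHyperplane

end QM

open QM in
/-- in a quasi-median graph, the neighborhood `N(J)` of a hyperplane `J`
(the subgraph generated by the edges of `J`, i.e. all their endpoints) is gated. -/
theorem hyperplane_neighborhood_gated
    (G : SimpleGraph V) (hqm : QuasiMedian G) (hconn : G.Connected)
    (J : Set (Sym2 V)) (hJ : IsHyperplane G J) :
    Gated G {v : V | ∃ e ∈ J, v ∈ e} := by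
  obtain ⟨htri, hquad, hk4, hk32⟩ := hqm
  exact gated_of_locallyConvex hconn htri hquad hJ.carrier_nonempty
    hJ.induce_carrier_preconnected (hJ.carrier_containsTriangles htri hquad hk4 hk32)
    (hJ.carrier_locallyConvex htri hquad hk4 hk32)
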